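/- arXiv:2207.03076 — 7 statements merged into one kernel-verified Lean document; each statement's English description precedes it below -/
import Mathlib

section
/- Fix a divider value vector g^D ∈ ℝ^n and suppose the chooser's values g^C_1,…,g^C_n are independent with g^C_i Gaussian of mean μ_i and variance σ_i² where σ_i > 0 for every i. Then there exists q* ∈ [−1,1]^n attaining the supremum of the divider's expected utility U over [−1,1]^n and satisfying both ∑_i q*_i g^D_i ≥ 0 (the divider weakly prefers pile 1) and P(q*) ≤ 1/2 (the chooser is weakly more likely to pick pile 2). -/
open BigOperators MeasureTheory ProbabilityTheory Filter Topology

lemma gaussPi_ac : ∀ (n : ℕ) (m σ : Fin n → ℝ), (∀ i, 0 < σ i) →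
    Measure.pi (fun i => gaussianReal (m i) (Real.toNNReal (σ i ^ 2)))
      ≪ (volume : Measure (Fin n → ℝ)) := by
  intro n
  induction n with
  | zero =>
    intro m σ _ s hs
    rcases s.eq_empty_or_nonempty with rfl | hne
    · simp
    · exfalso
      obtain ⟨a, ha⟩ := hne
      have hsu : s = Set.univ := Set.eq_univ_of_forall fun b => by rwa [Subsingleton.elim b a]
      rw [hsu, volume_pi, Measure.pi_univ] at hs
      simp at hs
  | succ k ih =>
    intro m σ hσ
    set e := MeasurableEquiv.piFinSuccAbove (fun _ : Fin (k + 1) => ℝ) 0 with he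
    have h1 := measurePreserving_piFinSuccAbove
      (fun i : Fin (k + 1) => gaussianReal (m i) (Real.toNNReal (σ i ^ 2))) 0
    have h2 := measurePreserving_piFinSuccAbove (fun _ : Fin (k + 1) => (volume : Measure ℝ)) 0
    have hv : ∀ i : Fin (k + 1), Real.toNNReal (σ i ^ 2) ≠ 0 := by
      intro i
      simp only [ne_eq, Real.toNNReal_eq_zero, not_le]
      exact pow_pos (hσ i) 2
    have hac : ((gaussianReal (m 0) (Real.toNNReal (σ 0 ^ 2))).prod
        (Measure.pi fun j => gaussianReal (m ((0 : Fin (k + 1)).succAbove j))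
          (Real.toNNReal (σ ((0 : Fin (k + 1)).succAbove j) ^ 2))))
        ≪ ((volume : Measure ℝ).prod (Measure.pi fun _ : Fin k => (volume : Measure ℝ))) :=
      (gaussianReal_absolutelyContinuous _ (hv 0)).prod
        (ih (fun j => m ((0 : Fin (k + 1)).succAbove j))
            (fun j => σ ((0 : Fin (k + 1)).succAbove j)) (fun j => hσ _))
    have e1 : Measure.pi (fun i : Fin (k + 1) =>
        gaussianReal (m i) (Real.toNNReal (σ i ^ 2))) =
        Measure.map e.symm ((gaussianReal (m 0) (Real.toNNReal (σ 0 ^ 2))).prod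
          (Measure.pi fun j => gaussianReal (m ((0 : Fin (k + 1)).succAbove j))
            (Real.toNNReal (σ ((0 : Fin (k + 1)).succAbove j) ^ 2)))) := (MeasurePreserving.symm _ h1).map_eq.symm
    have e2 : Measure.pi (fun _ : Fin (k + 1) => (volume : Measure ℝ)) =
        Measure.map e.symm ((volume : Measure ℝ).prod
          (Measure.pi fun _ : Fin k => (volume : Measure ℝ))) := (MeasurePreserving.symm _ h2).map_eq.symm
    rw [show (volume : Measure (Fin (k + 1) → ℝ)) =
        Measure.pi (fun _ : Fin (k + 1) => (volume : Measure ℝ)) from volume_pi]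
    rw [e1, e2]
    exact hac.map e.symm.measurable

/-- With chooser values independent Gaussians `g^C_i ~ N(m_i, σ_i²)`,
`σ_i > 0`, there is a division `q* ∈ [−1,1]^n` attaining the supremum of the divider's
expected utility over `[−1,1]^n` and satisfying `∑ q*_i g^D_i ≥ 0` (the divider weakly
prefers pile 1) and `P(q*) ≤ 1/2` (the chooser is weakly more likely to pick pile 2). -/
theorem exists_optimal_division_normal (n : ℕ) (gD m σ : Fin n → ℝ) (hσ : ∀ i, 0 < σ i)
    (μ : Measure (Fin n → ℝ))
    (hμ : μ = Measure.pi fun i => gaussianReal (m i) (Real.toNNReal (σ i ^ 2)))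
    (P : (Fin n → ℝ) → ℝ)
    (hP : ∀ q : Fin n → ℝ, P q = (μ {x | 0 < ∑ i, q i * x i}).toReal)
    (U : (Fin n → ℝ) → ℝ)
    (hU : ∀ q : Fin n → ℝ, U q = P q * ∑ i, (1 - (1 + q i) / 2) * gD i
            + (1 - P q) * ∑ i, ((1 + q i) / 2) * gD i) :
    ∃ qstar : Fin n → ℝ,
      (∀ i, qstar i ∈ Set.Icc (-1 : ℝ) 1) ∧
      (∀ q : Fin n → ℝ, (∀ i, q i ∈ Set.Icc (-1 : ℝ) 1) → U q ≤ U qstar) ∧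
      0 ≤ ∑ i, qstar i * gD i ∧
      P qstar ≤ 1 / 2 := by
  -- basic measurability
  have hcontsum : ∀ q : Fin n → ℝ, Continuous fun x : Fin n → ℝ => ∑ i, q i * x i :=
    fun q => continuous_finset_sum _ fun i _ => continuous_const.mul (continuous_apply i)
  have hmeasgt : ∀ q : Fin n → ℝ, MeasurableSet {x : Fin n → ℝ | 0 < ∑ i, q i * x i} :=
    fun q => measurableSet_lt measurable_const (hcontsum q).measurable
  -- μ is a probability measure
  haveI : IsProbabilityMeasure μ := by
    subst hμ
    constructor
    rw [Measure.pi_univ]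
    simp [measure_univ]
  -- hyperplanes are null
  have hnull : ∀ q : Fin n → ℝ, q ≠ 0 → μ {x | ∑ i, q i * x i = 0} = 0 := by
    intro q hq
    obtain ⟨j, hj⟩ := Function.ne_iff.mp hq
    have hvol : (volume : Measure (Fin n → ℝ)) {x | ∑ i, q i * x i = 0} = 0 := by
      let f : (Fin n → ℝ) →ₗ[ℝ] ℝ :=
        { toFun := fun x => ∑ i, q i * x i
          map_add' := by
            intro x y
            simp only [Pi.add_apply, mul_add]
            exact Finset.sum_add_distrib
          map_smul' := by
            intro c x
            simp only [Pi.smul_apply, smul_eq_mul, RingHom.id_apply, Finset.mul_sum]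
            exact Finset.sum_congr rfl fun i _ => by ring }
      have hker : {x : Fin n → ℝ | ∑ i, q i * x i = 0} = (LinearMap.ker f : Set (Fin n → ℝ)) := by
        ext x; simp [f, LinearMap.mem_ker]
      rw [hker]
      apply Measure.addHaar_submodule
      intro htop
      apply hj
      have hf0 : f = 0 := LinearMap.ker_eq_top.mp htop
      have : f (Pi.single j 1) = q j := by
        simp only [f, LinearMap.coe_mk, AddHom.coe_mk]
        rw [Finset.sum_eq_single j]
        · simp
        · intro i _ hij; simp [Pi.single_apply, hij]
        · intro h; exact absurd (Finset.mem_univ j) h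
      rw [hf0] at this
      simpa using this.symm
    rw [hμ]
    exact gaussPi_ac n m σ hσ hvol
  -- bounds on P
  have hP0 : ∀ q, 0 ≤ P q := fun q => by rw [hP q]; exact ENNReal.toReal_nonneg
  have hP1 : ∀ q, P q ≤ 1 := by
    intro q
    rw [hP q]
    calc (μ {x | 0 < ∑ i, q i * x i}).toReal ≤ (1 : ENNReal).toReal :=
          ENNReal.toReal_mono ENNReal.one_ne_top prob_le_one
      _ = 1 := by simp
  -- P at 0
  have hPzero : P 0 = 0 := by
    rw [hP 0]
    have : {x : Fin n → ℝ | 0 < ∑ i, (0 : Fin n → ℝ) i * x i} = ∅ := by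
      ext x; simp
    rw [this]
    simp
  -- symmetry
  have hsym : ∀ q : Fin n → ℝ, q ≠ 0 → P (-q) = 1 - P q := by
    intro q hq
    have hset : {x : Fin n → ℝ | 0 < ∑ i, (-q) i * x i} = {x | ∑ i, q i * x i < 0} := by
      ext x
      simp [neg_mul, Finset.sum_neg_distrib, neg_pos]
    have hle : μ {x | ∑ i, q i * x i < 0} = μ {x : Fin n → ℝ | 0 < ∑ i, q i * x i}ᶜ := by
      apply le_antisymm
      · apply measure_mono
        intro x hx
        simp only [Set.mem_setOf_eq] at hx
        simp only [Set.mem_compl_iff, Set.mem_setOf_eq]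
        exact not_lt.mpr (le_of_lt hx)
      · calc μ {x : Fin n → ℝ | 0 < ∑ i, q i * x i}ᶜ
            ≤ μ ({x | ∑ i, q i * x i < 0} ∪ {x | ∑ i, q i * x i = 0}) := by
              apply measure_mono
              intro x hx
              simp only [Set.mem_compl_iff, Set.mem_setOf_eq] at hx
              simp only [Set.mem_union, Set.mem_setOf_eq]
              rcases lt_or_eq_of_le (not_lt.mp hx) with h | h
              · exact Or.inl h
              · exact Or.inr h
          _ ≤ μ {x | ∑ i, q i * x i < 0} + μ {x | ∑ i, q i * x i = 0} := measure_union_le _ _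
          _ = μ {x | ∑ i, q i * x i < 0} := by rw [hnull q hq, add_zero]
    have hcompl : μ {x : Fin n → ℝ | 0 < ∑ i, q i * x i}ᶜ
        = 1 - μ {x : Fin n → ℝ | 0 < ∑ i, q i * x i} := by
      rw [measure_compl (hmeasgt q) (measure_ne_top μ _), measure_univ]
    rw [hP (-q), hP q, hset, hle, hcompl,
      ENNReal.toReal_sub_of_le prob_le_one ENNReal.one_ne_top]
    simp
  -- rewrite U
  set S : ℝ := ∑ i, gD i with hS
  set T : (Fin n → ℝ) → ℝ := fun q => ∑ i, q i * gD i with hT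
  have hU' : ∀ q : Fin n → ℝ, U q = (S + T q) / 2 - P q * T q := by
    intro q
    have e1 : ∑ i, (1 - (1 + q i) / 2) * gD i = (∑ i, gD i) / 2 - (∑ i, q i * gD i) / 2 := by
      calc ∑ i, (1 - (1 + q i) / 2) * gD i = ∑ i, (gD i / 2 - (q i * gD i) / 2) :=
            Finset.sum_congr rfl fun i _ => by ring
        _ = (∑ i, gD i) / 2 - (∑ i, q i * gD i) / 2 := by
            rw [Finset.sum_sub_distrib, Finset.sum_div, Finset.sum_div]
    have e2 : ∑ i, ((1 + q i) / 2) * gD i = (∑ i, gD i) / 2 + (∑ i, q i * gD i) / 2 := by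
      calc ∑ i, ((1 + q i) / 2) * gD i = ∑ i, (gD i / 2 + (q i * gD i) / 2) :=
            Finset.sum_congr rfl fun i _ => by ring
        _ = (∑ i, gD i) / 2 + (∑ i, q i * gD i) / 2 := by
            rw [Finset.sum_add_distrib, Finset.sum_div, Finset.sum_div]
    rw [hU q, e1, e2]
    simp only [hS, hT]
    ring
  have hT0 : T 0 = 0 := by simp [hT]
  have hTneg : ∀ q, T (-q) = -T q := by
    intro q
    simp [hT, neg_mul, Finset.sum_neg_distrib]
  have hTcont : Continuous T :=
    continuous_finset_sum _ fun i _ => (continuous_apply i).mul continuous_const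
  -- continuity of P away from 0
  have hPcont : ∀ q₀ : Fin n → ℝ, q₀ ≠ 0 → ContinuousAt P q₀ := by
    intro q₀ hq₀
    have hPfun : P = fun q => (μ {x | 0 < ∑ i, q i * x i}).toReal := funext hP
    rw [hPfun]
    have htm : Tendsto (fun q : Fin n → ℝ => μ {x | 0 < ∑ i, q i * x i}) (𝓝 q₀)
        (𝓝 (μ {x | 0 < ∑ i, q₀ i * x i})) := by
      apply tendsto_measure_of_ae_tendsto_indicator_of_isFiniteMeasure (𝓝 q₀)
        (hmeasgt q₀) (fun q => hmeasgt q)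
      have hae : ∀ᵐ x ∂μ, ∑ i, q₀ i * x i ≠ 0 := by
        rw [ae_iff]
        have : {x : Fin n → ℝ | ¬ ∑ i, q₀ i * x i ≠ 0} = {x | ∑ i, q₀ i * x i = 0} := by
          ext x; simp
        rw [this]
        exact hnull q₀ hq₀
      filter_upwards [hae] with x hx
      have hc : Tendsto (fun q : Fin n → ℝ => ∑ i, q i * x i) (𝓝 q₀) (𝓝 (∑ i, q₀ i * x i)) :=
        (continuous_finset_sum _ fun i _ => (continuous_apply i).mul continuous_const).tendsto q₀
      rcases hx.lt_or_gt with h | h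
      · filter_upwards [hc.eventually_lt_const h] with q hq
        exact iff_of_false (not_lt.mpr (le_of_lt hq)) (not_lt.mpr (le_of_lt h))
      · filter_upwards [hc.eventually_const_lt h] with q hq
        exact iff_of_true hq h
    exact (ENNReal.tendsto_toReal (measure_ne_top μ _)).comp htm
  -- continuity of U
  have hUcont : Continuous U := by
    have hUfun : U = fun q => (S + T q) / 2 - P q * T q := funext hU'
    rw [hUfun]
    rw [continuous_iff_continuousAt]
    intro q₀
    by_cases hq₀ : q₀ = 0
    · subst hq₀
      have habs : Tendsto (fun q => |T q|) (𝓝 (0 : Fin n → ℝ)) (𝓝 0) := by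
        have h := hTcont.abs.tendsto (0 : Fin n → ℝ)
        rwa [hT0, abs_zero] at h
      have h2 : Tendsto (fun q => P q * T q) (𝓝 (0 : Fin n → ℝ)) (𝓝 0) := by
        apply squeeze_zero_norm _ habs
        intro q
        rw [Real.norm_eq_abs, abs_mul]
        calc |P q| * |T q| ≤ 1 * |T q| := by
              apply mul_le_mul_of_nonneg_right _ (abs_nonneg _)
              rw [abs_of_nonneg (hP0 q)]
              exact hP1 q
          _ = |T q| := one_mul _
      have h1 : Tendsto (fun q => (S + T q) / 2) (𝓝 (0 : Fin n → ℝ)) (𝓝 ((S + T 0) / 2)) :=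
        ((continuous_const.add hTcont).div_const 2).tendsto 0
      have h3 := h1.sub h2
      simpa [ContinuousAt, hT0] using h3
    · exact (((continuousAt_const.add (hTcont.continuousAt)).div_const 2).sub
        ((hPcont q₀ hq₀).mul hTcont.continuousAt))
  -- compactness and maximizer
  have hKeq : {q : Fin n → ℝ | ∀ i, q i ∈ Set.Icc (-1 : ℝ) 1}
      = Set.pi Set.univ fun _ : Fin n => Set.Icc (-1 : ℝ) 1 := by
    ext q
    constructor
    · exact fun h i _ => h i
    · exact fun h i => h i (Set.mem_univ i)
  have hK : IsCompact {q : Fin n → ℝ | ∀ i, q i ∈ Set.Icc (-1 : ℝ) 1} := by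
    rw [hKeq]; exact isCompact_univ_pi fun _ => isCompact_Icc
  have h0K : (0 : Fin n → ℝ) ∈ {q : Fin n → ℝ | ∀ i, q i ∈ Set.Icc (-1 : ℝ) 1} := by
    intro i
    constructor <;> norm_num
  obtain ⟨M, hMK, hMmax⟩ := hK.exists_isMaxOn ⟨0, h0K⟩ hUcont.continuousOn
  have hU0 : U 0 = S / 2 := by rw [hU' 0, hT0]; ring
  rcases lt_trichotomy (T M) 0 with hTM | hTM | hTM
  · -- T M < 0 : use -M
    have hMne : M ≠ 0 := by
      intro h
      rw [h, hT0] at hTM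
      exact lt_irrefl 0 hTM
    have hPM : 1 / 2 ≤ P M := by
      by_contra hc
      push_neg at hc
      have h1 : U 0 ≤ U M := hMmax h0K
      rw [hU0, hU' M] at h1
      nlinarith
    refine ⟨-M, ?_, ?_, ?_, ?_⟩
    · intro i
      have := hMK i
      simp only [Pi.neg_apply, Set.mem_Icc] at this ⊢
      constructor <;> linarith [this.1, this.2]
    · intro q hq
      have hUM : U (-M) = U M := by
        rw [hU' (-M), hU' M, hTneg M, hsym M hMne]
        ring
      rw [hUM]
      exact hMmax hq
    · rw [show ∑ i, (-M) i * gD i = T (-M) from rfl, hTneg M]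
      linarith
    · rw [hsym M hMne]
      linarith
  · -- T M = 0 : use 0
    have hUM : U M = S / 2 := by rw [hU' M, hTM]; ring
    refine ⟨0, h0K, ?_, ?_, ?_⟩
    · intro q hq
      calc U q ≤ U M := hMmax hq
        _ = U 0 := by rw [hUM, hU0]
    · simp
    · rw [hPzero]; norm_num
  · -- T M > 0 : use M
    have hPM : P M ≤ 1 / 2 := by
      by_contra hc
      push_neg at hc
      have h1 : U 0 ≤ U M := hMmax h0K
      rw [hU0, hU' M] at h1
      nlinarith
    exact ⟨M, hMK, fun q hq => hMmax hq, le_of_lt hTM, hPM⟩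
end

section
/- Suppose the chooser's values g^C_1,…,g^C_n are independent with g^C_i Gaussian of mean μ_i > 0 and variance σ_i² with σ_i > 0, the divider's values satisfy g^D_i > 0 for all i, and all critical ratios are equal: g^D_i/μ_i = g^D_j/μ_j for all i, j. Then for every division q ∈ [−1,1]^n the divider's expected utility satisfies U(q) ≤ (1/2)∑_{i=1}^n g^D_i; that is, the divider cannot exceed his baseline utility. -/
/-!
With equal critical ratios, `g^D = r • μ` for some `r > 0`, and the divider's utility is his
baseline plus `(1/2 - P(q)) · r · ⟨q, μ⟩`. Reflecting each `g^C_i` through its mean preserves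
the law of `g^C` and reflects the chooser's value `⟨q, g^C⟩` of pile 1 through `⟨q, μ⟩`, so
`P(q) ≥ 1/2` when `⟨q, μ⟩ > 0` and `P(q) ≤ 1/2` when `⟨q, μ⟩ ≤ 0`: the correction term is
never positive.
-/

open MeasureTheory ProbabilityTheory Set
open scoped NNReal

lemma gaussianReal_map_two_mul_sub (m : ℝ) (v : ℝ≥0) :
    (gaussianReal m v).map (2 * m - ·) = gaussianReal m v := by
  rw [gaussianReal_map_const_sub]
  ring_nf

lemma map_two_mul_sub_map_sum_mul_pi {ι : Type*} [Fintype ι]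
    (μ : ι → Measure ℝ) [∀ i, SigmaFinite (μ i)] (m q : ι → ℝ)
    (hμ : ∀ i, (μ i).map (2 * m i - ·) = μ i) :
    ((Measure.pi μ).map fun x => ∑ i, q i * x i).map (2 * ∑ i, q i * m i - ·)
      = (Measure.pi μ).map fun x => ∑ i, q i * x i := by
  have hreflect : MeasurePreserving (fun x : ι → ℝ => fun i => 2 * m i - x i)
      (Measure.pi μ) (Measure.pi μ) :=
    measurePreserving_pi _ _ fun i => ⟨by fun_prop, hμ i⟩
  have hcomm : (fun x : ι → ℝ => ∑ i, q i * (2 * m i - x i))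
      = fun x => 2 * ∑ i, q i * m i - ∑ i, q i * x i := by
    funext x
    simp only [Finset.mul_sum, ← Finset.sum_sub_distrib]
    exact Finset.sum_congr rfl fun i _ => by ring
  calc ((Measure.pi μ).map fun x => ∑ i, q i * x i).map (2 * ∑ i, q i * m i - ·)
      = (Measure.pi μ).map fun x => ∑ i, q i * (2 * m i - x i) := by
        rw [Measure.map_map (by fun_prop) (by fun_prop), hcomm]; rfl
    _ = ((Measure.pi μ).map fun x i => 2 * m i - x i).map fun x => ∑ i, q i * x i := by
        rw [Measure.map_map (by fun_prop) hreflect.measurable]; rfl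
    _ = (Measure.pi μ).map fun x => ∑ i, q i * x i := by rw [hreflect.map_eq]

lemma measureReal_Ioi_zero_eq_measureReal_Iio {ρ : Measure ℝ} {c : ℝ}
    (hρ : ρ.map (2 * c - ·) = ρ) : ρ.real (Ioi 0) = ρ.real (Iio (2 * c)) := by
  conv_lhs => rw [← hρ]
  rw [map_measureReal_apply (by fun_prop) measurableSet_Ioi]
  congr 1
  ext x
  simp

lemma half_sub_measureReal_Ioi_zero_mul_nonpos {ρ : Measure ℝ} [IsProbabilityMeasure ρ] {c : ℝ}
    (hρ : ρ.map (2 * c - ·) = ρ) : (1 / 2 - ρ.real (Ioi 0)) * c ≤ 0 := by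
  have hsymm := measureReal_Ioi_zero_eq_measureReal_Iio hρ
  rcases le_or_gt c 0 with hc | hc
  · have hdisj : Disjoint (Ioi (0 : ℝ)) (Iio (2 * c)) :=
      Iio_disjoint_Ioi_of_le (by linarith) |>.symm
    have hle : ρ.real (Ioi 0 ∪ Iio (2 * c)) ≤ 1 := measureReal_le_one
    rw [measureReal_union hdisj measurableSet_Iio, ← hsymm] at hle
    nlinarith
  · have hcover : Ioi (0 : ℝ) ∪ Iio (2 * c) = univ := by
      ext x
      simp only [mem_union, mem_Ioi, mem_Iio, mem_univ, iff_true]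
      by_contra! h
      linarith [h.1, h.2]
    have hge := measureReal_union_le (μ := ρ) (Ioi 0) (Iio (2 * c))
    rw [hcover, probReal_univ, ← hsymm] at hge
    nlinarith

lemma exists_pos_eq_mul_of_div_eq {ι : Type*} {g m : ι → ℝ}
    (hm : ∀ i, 0 < m i) (hg : ∀ i, 0 < g i) (hratio : ∀ i j, g i / m i = g j / m j) :
    ∃ r, 0 < r ∧ ∀ i, g i = r * m i := by
  rcases isEmpty_or_nonempty ι with hι | ⟨⟨i₀⟩⟩
  · exact ⟨1, one_pos, fun i => hι.elim i⟩
  · refine ⟨g i₀ / m i₀, div_pos (hg i₀) (hm i₀), fun i => ?_⟩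
    rw [← hratio i i₀, div_mul_cancel₀ _ (hm i).ne']

lemma utility_eq_baseline_add {ι : Type*} [Fintype ι] (p : ℝ) (q g : ι → ℝ) :
    p * ∑ i, (1 - (1 + q i) / 2) * g i + (1 - p) * ∑ i, ((1 + q i) / 2) * g i
      = 1 / 2 * ∑ i, g i + (1 / 2 - p) * ∑ i, q i * g i := by
  simp only [Finset.mul_sum, ← Finset.sum_add_distrib]
  exact Finset.sum_congr rfl fun i _ => by ring

theorem equal_critical_ratios_baseline_general (n : ℕ) (gD m σ : Fin n → ℝ)
    (hm : ∀ i, 0 < m i) (hgD : ∀ i, 0 < gD i)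
    (hratio : ∀ i j, gD i / m i = gD j / m j)
    (μ : Measure (Fin n → ℝ))
    (hμ : μ = Measure.pi fun i => gaussianReal (m i) (Real.toNNReal (σ i ^ 2)))
    (P : (Fin n → ℝ) → ℝ)
    (hP : ∀ q : Fin n → ℝ, P q = (μ {x | 0 < ∑ i, q i * x i}).toReal)
    (U : (Fin n → ℝ) → ℝ)
    (hU : ∀ q : Fin n → ℝ, U q = P q * ∑ i, (1 - (1 + q i) / 2) * gD i
            + (1 - P q) * ∑ i, ((1 + q i) / 2) * gD i) :
    ∀ q : Fin n → ℝ, (∀ i, q i ∈ Set.Icc (-1 : ℝ) 1) →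
      U q ≤ (1 / 2) * ∑ i, gD i := by
  intro q _
  obtain ⟨r, hr, hgD_eq⟩ := exists_pos_eq_mul_of_div_eq hm hgD hratio
  have hgain : ∑ i, q i * gD i = r * ∑ i, q i * m i := by
    simp only [hgD_eq, Finset.mul_sum]
    exact Finset.sum_congr rfl fun i _ => by ring
  have hL : Measurable fun x : Fin n → ℝ => ∑ i, q i * x i := by fun_prop
  have hP_law : P q = (μ.map fun x => ∑ i, q i * x i).real (Ioi 0) := by
    rw [hP, map_measureReal_apply hL measurableSet_Ioi]
    rfl
  have hsign : (1 / 2 - P q) * ∑ i, q i * m i ≤ 0 := by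
    subst hμ
    rw [hP_law]
    exact @half_sub_measureReal_Ioi_zero_mul_nonpos _ (Measure.isProbabilityMeasure_map
      hL.aemeasurable) _ (map_two_mul_sub_map_sum_mul_pi _ m q
      fun i => gaussianReal_map_two_mul_sub _ _)
  rw [hU, utility_eq_baseline_add, hgain]
  nlinarith

/-- With chooser values independent Gaussians `g^C_i ~ N(m_i, σ_i²)`,
`m_i > 0`, `σ_i > 0`, divider values `g^D_i > 0`, and all critical ratios equal
(`g^D_i/m_i = g^D_j/m_j` for all `i, j`), the divider cannot exceed his baseline: for every
division `q ∈ [−1,1]^n`, `U(q) ≤ (1/2)∑ g^D_i`. -/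
theorem equal_critical_ratios_baseline (n : ℕ) (gD m σ : Fin n → ℝ)
    (hm : ∀ i, 0 < m i) (hσ : ∀ i, 0 < σ i) (hgD : ∀ i, 0 < gD i)
    (hratio : ∀ i j, gD i / m i = gD j / m j)
    (μ : Measure (Fin n → ℝ))
    (hμ : μ = Measure.pi fun i => gaussianReal (m i) (Real.toNNReal (σ i ^ 2)))
    (P : (Fin n → ℝ) → ℝ)
    (hP : ∀ q : Fin n → ℝ, P q = (μ {x | 0 < ∑ i, q i * x i}).toReal)
    (U : (Fin n → ℝ) → ℝ)
    (hU : ∀ q : Fin n → ℝ, U q = P q * ∑ i, (1 - (1 + q i) / 2) * gD i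
            + (1 - P q) * ∑ i, ((1 + q i) / 2) * gD i) :
    ∀ q : Fin n → ℝ, (∀ i, q i ∈ Set.Icc (-1 : ℝ) 1) →
      U q ≤ (1 / 2) * ∑ i, gD i :=
  equal_critical_ratios_baseline_general n gD m σ hm hgD hratio μ hμ P hP U hU
end

section
/- Let n = 5, let the divider's value be g^D_i = 1 for each good i, and let the chooser's values g^C_1,…,g^C_5 be i.i.d., each equal to 1/100 with probability 3/5 and equal to 1 with probability 2/5. Consider the division p = (1, 2/5, 2/5, 2/5, 2/5), i.e., q = (1, −1/5, −1/5, −1/5, −1/5). Then the chooser strictly prefers pile 2 exactly when g^C_1 = 1/100 and at least one of g^C_2,…,g^C_5 equals 1; this event has probability (3/5)·(1 − (3/5)⁴) > 1/2, no realization makes the chooser indifferent, and the divider's expected utility U(q) strictly exceeds his baseline utility 5/2. -/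
/-!
On the support `{1/100, 1}⁵` of the chooser's values, the chooser's margin
`∑ qᵢ xᵢ = x₀ - (x₁ + x₂ + x₃ + x₄)/5` is negative exactly when `x₀ = 1/100` and some other
coordinate is `1`, and it never vanishes. Hence the chooser takes pile 2 with probability
`3/5 - (3/5)⁵ > 1/2`, i.e. takes pile 1 with probability `P < 1/2`. The divider's gain over his
baseline is `(1 - 2P) · (∑ qᵢ g^Dᵢ) / 2 = (1 - 2P) / 10 > 0`.
-/

open MeasureTheory

theorem divider_utility_sub_baseline {ι : Type*} [Fintype ι] (q g : ι → ℝ) (P : ℝ) :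
    P * ∑ i, (1 - (1 + q i) / 2) * g i + (1 - P) * ∑ i, ((1 + q i) / 2) * g i
      - (∑ i, g i) / 2 = (1 - 2 * P) * (∑ i, q i * g i) / 2 := by
  simp only [Finset.mul_sum, Finset.sum_div, ← Finset.sum_add_distrib, ← Finset.sum_sub_distrib]
  exact Finset.sum_congr rfl fun i _ => by ring

theorem ae_eq_or_eq_smul_dirac_add {α : Type*} [MeasurableSpace α] [MeasurableSingletonClass α]
    (a b : α) (c d : ENNReal) :
    ∀ᵐ y ∂(c • Measure.dirac a + d • Measure.dirac b), y = a ∨ y = b := by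
  rw [ae_add_measure_iff]
  exact ⟨Measure.ae_smul_measure (by simp [ae_dirac_eq]) c,
    Measure.ae_smul_measure (by simp [ae_dirac_eq]) d⟩

theorem probReal_pos_eq_one_sub_probReal_neg {α : Type*} [MeasurableSpace α] {μ : Measure α}
    [IsProbabilityMeasure μ] {f : α → ℝ} (hf : Measurable f) (h : ∀ᵐ x ∂μ, f x ≠ 0) :
    μ.real {x | 0 < f x} = 1 - μ.real {x | f x < 0} := by
  rw [← probReal_compl_eq_one_sub (measurableSet_lt hf measurable_const)]
  refine measureReal_congr (Filter.eventuallyEq_set.2 (h.mono fun x hx => ?_))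
  simp only [Set.mem_compl_iff, Set.mem_ofPred_eq, not_lt]
  exact ⟨le_of_lt, fun h => h.lt_of_ne' hx⟩

section Pi

variable {ι : Type*} [Fintype ι] {α : ι → Type*} [∀ i, MeasurableSpace (α i)]
  (μ : ∀ i, Measure (α i))

theorem ae_forall_mem_pi [∀ i, SigmaFinite (μ i)] {T : ∀ i, Set (α i)}
    (h : ∀ i, ∀ᵐ y ∂μ i, y ∈ T i) : ∀ᵐ x ∂Measure.pi μ, ∀ i, x i ∈ T i :=
  ae_all_iff.2 fun i => Measure.tendsto_eval_ae_ae.eventually (h i)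

theorem measureReal_pi_pi [∀ i, SigmaFinite (μ i)] (s : ∀ i, Set (α i)) :
    (Measure.pi μ).real (Set.univ.pi s) = ∏ i, (μ i).real (s i) := by
  simp [measureReal_def, Measure.pi_pi]

theorem measureReal_pi_eval_preimage [∀ i, IsProbabilityMeasure (μ i)] (i : ι)
    {s : Set (α i)} (hs : MeasurableSet s) :
    (Measure.pi μ).real (Function.eval i ⁻¹' s) = (μ i).real s :=
  (measurePreserving_eval μ i).measureReal_preimage hs.nullMeasurableSet

end Pi

local notation "q₀" => (![1, -1/5, -1/5, -1/5, -1/5] : Fin 5 → ℝ)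

theorem sum_q₀_mul (x : Fin 5 → ℝ) : ∑ i, q₀ i * x i = x 0 - (x 1 + x 2 + x 3 + x 4) / 5 := by
  simp [Fin.sum_univ_five]
  ring

theorem sum_q₀_mul_neg {x : Fin 5 → ℝ} (hx : ∀ i, 1 / 100 ≤ x i) (h0 : x 0 = 1 / 100)
    (hj : ∃ j ≠ 0, x j = 1) : ∑ i, q₀ i * x i < 0 := by
  obtain ⟨j, hj0, hj⟩ := hj
  rw [sum_q₀_mul]
  fin_cases j
  · exact absurd rfl hj0
  all_goals simp only [Fin.reduceFinMk, Fin.isValue] at hj; linarith [hx 1, hx 2, hx 3, hx 4]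

theorem sum_q₀_mul_pos {x : Fin 5 → ℝ} (hx : ∀ i, x i = 1 / 100 ∨ x i = 1)
    (h : ¬(x 0 = 1 / 100 ∧ ∃ j ≠ 0, x j = 1)) : 0 < ∑ i, q₀ i * x i := by
  have hle : ∀ i, x i ≤ 1 := fun i => by rcases hx i with h | h <;> norm_num [h]
  rw [sum_q₀_mul]
  by_cases h0 : x 0 = 1 / 100
  · push Not at h
    have hsmall : ∀ j ≠ 0, x j = 1 / 100 := fun j hj => (hx j).resolve_right (h h0 j hj)
    rw [h0, hsmall 1 (by decide), hsmall 2 (by decide), hsmall 3 (by decide),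
      hsmall 4 (by decide)]
    norm_num
  · rw [(hx 0).resolve_left h0]
    linarith [hle 1, hle 2, hle 3, hle 4]

theorem sum_q₀_mul_neg_iff {x : Fin 5 → ℝ} (hx : ∀ i, x i = 1 / 100 ∨ x i = 1) :
    ∑ i, q₀ i * x i < 0 ↔ x 0 = 1 / 100 ∧ ∃ j ≠ 0, x j = 1 := by
  have hge : ∀ i, 1 / 100 ≤ x i := fun i => by rcases hx i with h | h <;> norm_num [h]
  refine ⟨fun hneg => ?_, fun h => sum_q₀_mul_neg hge h.1 h.2⟩
  by_contra h
  exact (sum_q₀_mul_pos hx h).not_gt hneg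

theorem sum_q₀_mul_ne_zero {x : Fin 5 → ℝ} (hx : ∀ i, x i = 1 / 100 ∨ x i = 1) :
    ∑ i, q₀ i * x i ≠ 0 := by
  by_cases h : x 0 = 1 / 100 ∧ ∃ j ≠ 0, x j = 1
  · exact ((sum_q₀_mul_neg_iff hx).2 h).ne
  · exact (sum_q₀_mul_pos hx h).ne'

theorem sum_q₀_mul_neg_iff_mem_sdiff {x : Fin 5 → ℝ} (hx : ∀ i, x i = 1 / 100 ∨ x i = 1) :
    ∑ i, q₀ i * x i < 0 ↔ x ∈ {x | x 0 = 1 / 100} \ Set.univ.pi fun _ => {1 / 100} := by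
  simp only [sum_q₀_mul_neg_iff hx, Set.mem_sdiff, Set.mem_ofPred_eq, Set.mem_univ_pi,
    Set.mem_singleton_iff, not_forall]
  refine and_congr_right fun h0 => ⟨fun ⟨j, _, hj⟩ => ⟨j, by norm_num [hj]⟩, fun ⟨j, hj⟩ => ?_⟩
  exact ⟨j, fun hj0 => hj (hj0 ▸ h0), (hx j).resolve_left hj⟩

theorem measureReal_pi_sum_q₀_mul_neg {ν : Measure ℝ} [IsProbabilityMeasure ν]
    (hν : ∀ᵐ y ∂ν, y = 1 / 100 ∨ y = 1) :
    (Measure.pi fun _ => ν).real {x | ∑ i, q₀ i * x i < 0} =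
      ν.real {1 / 100} - ν.real {1 / 100} ^ 5 := by
  have hsdiff : {x | ∑ i, q₀ i * x i < 0} =ᵐ[Measure.pi fun _ => ν]
      ({x | x 0 = 1 / 100} \ Set.univ.pi fun _ => {1 / 100} : Set (Fin 5 → ℝ)) :=
    Filter.eventuallyEq_set.2 <| (ae_forall_mem_pi _ fun _ => hν).mono fun x hx =>
      sum_q₀_mul_neg_iff_mem_sdiff hx
  have hsub : (Set.univ.pi fun _ => {(1 / 100 : ℝ)}) ⊆ {x : Fin 5 → ℝ | x 0 = 1 / 100} :=
    fun x hx => hx 0 (Set.mem_univ 0)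
  rw [measureReal_congr hsdiff, measureReal_sdiff hsub
    (MeasurableSet.univ_pi fun _ => measurableSet_singleton _), measureReal_pi_pi,
    Finset.prod_const, Finset.card_univ, Fintype.card_fin]
  exact congrArg (· - _) (measureReal_pi_eval_preimage _ 0 (measurableSet_singleton _))

/-- Five goods, divider values all `1`, chooser values i.i.d. equal to
`1/100` with probability `3/5` and to `1` with probability `2/5`.  Under the division
`q = (1, −1/5, −1/5, −1/5, −1/5)` (i.e. `p = (1, 2/5, 2/5, 2/5, 2/5)`): the chooser strictly
prefers pile 2 exactly when `g^C_1 = 1/100` and some other good is valued `1`; this event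
has probability `(3/5)·(1 − (3/5)⁴) > 1/2`; no realization makes the chooser indifferent;
and the divider's expected utility exceeds his baseline `5/2`. -/
theorem symmetry_breaking_example
    (ν : Measure ℝ)
    (hν : ν = (3 / 5 : ENNReal) • Measure.dirac (1 / 100 : ℝ)
            + (2 / 5 : ENNReal) • Measure.dirac (1 : ℝ))
    (μ : Measure (Fin 5 → ℝ)) (hμ : μ = Measure.pi fun _ => ν)
    (gD : Fin 5 → ℝ) (hgD : ∀ i, gD i = 1)
    (q : Fin 5 → ℝ) (hq : q = ![1, -1/5, -1/5, -1/5, -1/5])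
    (P U : ℝ)
    (hP : P = (μ {x | 0 < ∑ i, q i * x i}).toReal)
    (hU : U = P * ∑ i, (1 - (1 + q i) / 2) * gD i
            + (1 - P) * ∑ i, ((1 + q i) / 2) * gD i) :
    (∀ x : Fin 5 → ℝ, (∀ i, x i = 1 / 100 ∨ x i = 1) →
      ((∑ i, q i * x i) < 0 ↔ (x 0 = 1 / 100 ∧ ∃ i : Fin 5, i ≠ 0 ∧ x i = 1))) ∧
    (μ {x | (∑ i, q i * x i) < 0}).toReal = (3 / 5) * (1 - (3 / 5 : ℝ) ^ 4) ∧
    (1 / 2 : ℝ) < (3 / 5) * (1 - (3 / 5 : ℝ) ^ 4) ∧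
    μ {x | (∑ i, q i * x i) = 0} = 0 ∧
    (5 / 2 : ℝ) < U := by
  subst hq hμ
  have hν_supp : ∀ᵐ y ∂ν, y = 1 / 100 ∨ y = 1 := hν ▸ ae_eq_or_eq_smul_dirac_add _ _ _ _
  have : IsProbabilityMeasure ν := ⟨by norm_num [hν, ENNReal.div_add_div_same, ENNReal.div_self]⟩
  have hν_low : ν.real {1 / 100} = 3 / 5 := by simp [hν, measureReal_def]
  have hne : ∀ᵐ x ∂Measure.pi (fun _ => ν), ∑ i, q₀ i * x i ≠ 0 :=
    (ae_forall_mem_pi _ fun _ => hν_supp).mono fun x hx => sum_q₀_mul_ne_zero hx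
  have hneg := measureReal_pi_sum_q₀_mul_neg hν_supp
  rw [hν_low] at hneg
  have hP' : P = 1 - (3 / 5 - (3 / 5) ^ 5) := by
    rw [hP, ← measureReal_def, probReal_pos_eq_one_sub_probReal_neg (by fun_prop) hne, hneg]
  have hgain := divider_utility_sub_baseline q₀ gD P
  rw [← hU, show ∑ i, gD i = 5 by simp [hgD],
    show ∑ i, q₀ i * gD i = 1 / 5 by simp [hgD, Fin.sum_univ_five]; norm_num, hP'] at hgain
  refine ⟨fun x hx => sum_q₀_mul_neg_iff hx, ?_, by norm_num, ?_, by linarith⟩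
  · rw [← measureReal_def, hneg]
    ring
  · simpa using ae_iff.1 hne
end

section
/- Fix a divider value vector g^D ∈ ℝ^n and any probability distribution for the chooser's value vector g^C ∈ ℝ^n. Let q ∈ [−1,1]^n be a division with m := max_i |q_i| satisfying 0 < m < 1, and suppose (1/2 − P(q))·∑_i q_i g^D_i > 0 (so U(q) exceeds the divider's baseline). Then the rescaled division q' := q/m lies in [−1,1]^n, satisfies |q'_{i*}| = 1 for some good i* (that good is placed entirely in one pile), has P(q') = P(q), and yields strictly larger divider expected utility: U(q') > U(q). -/
open BigOperators MeasureTheory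

/-- Fix divider values `g^D` and any probability law `μ` for the chooser's
values.  Let `q ∈ [−1,1]^n` with `m := max_i |q_i|` satisfying `0 < m < 1`, and suppose
`(1/2 − P(q))·∑ q_i g^D_i > 0`.  Then the rescaled division `q' := q/m` lies in `[−1,1]^n`,
puts some good `i*` entirely in one pile (`|q'_{i*}| = 1`), has `P(q') = P(q)`, and yields
strictly larger divider expected utility: `U(q') > U(q)`. -/
theorem rescaling_improves (n : ℕ) (gD : Fin n → ℝ)
    (μ : Measure (Fin n → ℝ)) [IsProbabilityMeasure μ]
    (P : (Fin n → ℝ) → ℝ)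
    (hP : ∀ r : Fin n → ℝ, P r = (μ {x | 0 < ∑ i, r i * x i}).toReal)
    (U : (Fin n → ℝ) → ℝ)
    (hU : ∀ r : Fin n → ℝ, U r = P r * ∑ i, (1 - (1 + r i) / 2) * gD i
            + (1 - P r) * ∑ i, ((1 + r i) / 2) * gD i)
    (q : Fin n → ℝ) (hq : ∀ i, q i ∈ Set.Icc (-1 : ℝ) 1)
    (m : ℝ) (hub : ∀ i, |q i| ≤ m) (hatt : ∃ i, |q i| = m)
    (hm0 : 0 < m) (hm1 : m < 1)
    (hgain : 0 < (1 / 2 - P q) * ∑ i, q i * gD i) :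
    (∀ i, (fun i => q i / m) i ∈ Set.Icc (-1 : ℝ) 1) ∧
    (∃ istar : Fin n, |q istar / m| = 1) ∧
    P (fun i => q i / m) = P q ∧
    U q < U (fun i => q i / m) := by
  have key : ∀ r : Fin n → ℝ,
      U r = (∑ i, gD i) / 2 + (1 / 2 - P r) * ∑ i, r i * gD i := by
    intro r
    rw [hU]
    have h1 : ∑ i, (1 - (1 + r i) / 2) * gD i
        = (∑ i, gD i) / 2 - (∑ i, r i * gD i) / 2 := by
      rw [Finset.sum_div, Finset.sum_div, ← Finset.sum_sub_distrib]
      exact Finset.sum_congr rfl fun i _ => by ring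
    have h2 : ∑ i, ((1 + r i) / 2) * gD i
        = (∑ i, gD i) / 2 + (∑ i, r i * gD i) / 2 := by
      rw [Finset.sum_div, Finset.sum_div, ← Finset.sum_add_distrib]
      exact Finset.sum_congr rfl fun i _ => by ring
    rw [h1, h2]; ring
  have hPeq : P (fun i => q i / m) = P q := by
    rw [hP, hP]
    congr 2
    ext x
    simp only [Set.mem_setOf_eq]
    have hsum : ∑ i, (q i / m) * x i = (∑ i, q i * x i) / m := by
      rw [Finset.sum_div]
      exact Finset.sum_congr rfl fun i _ => by ring
    rw [hsum, lt_div_iff₀ hm0, zero_mul]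
  refine ⟨?_, ?_, hPeq, ?_⟩
  · intro i
    have := hub i
    constructor
    · show -1 ≤ q i / m
      rw [le_div_iff₀ hm0]
      nlinarith [neg_abs_le (q i)]
    · rw [div_le_one hm0]
      exact (abs_le.mp (this)).2
  · obtain ⟨i, hi⟩ := hatt
    exact ⟨i, by rw [abs_div, hi, abs_of_pos hm0, div_self (ne_of_gt hm0)]⟩
  · rw [key, key, hPeq]
    have hsum : ∑ i, (q i / m) * gD i = (∑ i, q i * gD i) / m := by
      rw [Finset.sum_div]
      exact Finset.sum_congr rfl fun i _ => by ring
    rw [hsum]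
    have h : (1 / 2 - P q) * ∑ i, q i * gD i
        < (1 / 2 - P q) * ((∑ i, q i * gD i) / m) := by
      rw [mul_div_assoc']
      rw [lt_div_iff₀ hm0]
      nlinarith
    linarith
end

section
/- Let T, v, v', P, P' be real numbers with P, P' ∈ [0,1], T − v' ≤ T − v ≤ v ≤ v' (equivalently T/2 ≤ v ≤ v'), P ≤ P', and suppose the two-point lottery paying v with probability 1−P and T−v with probability P has mean at least that of the lottery paying v' with probability 1−P' and T−v' with probability P', i.e., (1−P)v + P(T−v) ≥ (1−P')v' + P'(T−v'). Then for every nondecreasing concave function f : ℝ → ℝ, (1−P)f(v) + P f(T−v) ≥ (1−P')f(v') + P' f(T−v'). -/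
/-- Comparison of two-point lotteries: if `T − v' ≤ T − v ≤ v ≤ v'`,
`P ≤ P'` with `P, P' ∈ [0,1]`, and the lottery paying `v` w.p. `1−P` and `T−v` w.p. `P` has
mean at least that of the lottery paying `v'` w.p. `1−P'` and `T−v'` w.p. `P'`, then every
agent with a nondecreasing concave utility `f` weakly prefers the first lottery:
`(1−P)f(v) + P f(T−v) ≥ (1−P')f(v') + P' f(T−v')`. -/
theorem lottery_comparison (T v v' P P' : ℝ)
    (hP : P ∈ Set.Icc (0 : ℝ) 1) (hP' : P' ∈ Set.Icc (0 : ℝ) 1)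
    (h1 : T - v' ≤ T - v) (h2 : T - v ≤ v) (h3 : v ≤ v')
    (hPP' : P ≤ P')
    (hmean : (1 - P') * v' + P' * (T - v') ≤ (1 - P) * v + P * (T - v))
    (f : ℝ → ℝ) (hmono : Monotone f) (hconc : ConcaveOn ℝ Set.univ f) :
    (1 - P') * f v' + P' * f (T - v') ≤ (1 - P) * f v + P * f (T - v) := by
  obtain ⟨hP0, hP1⟩ := hP
  obtain ⟨hP'0, hP'1⟩ := hP'
  set d : ℝ := v' - (T - v') with hd
  have hd0 : 0 ≤ d := by simp only [hd]; linarith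
  rcases eq_or_lt_of_le hd0 with hdeq | hdpos
  · -- degenerate: all four points equal
    have hv : v = v' := by linarith [hdeq.symm]
    have hTv : T - v = v' := by linarith [hdeq.symm]
    have hTv' : T - v' = v' := by linarith [hdeq.symm]
    rw [hv, hTv']
    linarith
  · set a : ℝ := (v' - v) / d with ha
    set b : ℝ := (v' - (T - v)) / d with hb
    have ha0 : 0 ≤ a := div_nonneg (by linarith) hd0
    have ha1 : a ≤ 1 := by
      rw [ha, div_le_one hdpos]; simp only [hd]; linarith
    have hb0 : 0 ≤ b := div_nonneg (by linarith) hd0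
    have hb1 : b ≤ 1 := by
      rw [hb, div_le_one hdpos]; simp only [hd]; linarith
    have hav : (1 - a) * v' + a * (T - v') = v := by
      have : a * d = v' - v := by
        rw [ha, div_mul_cancel₀]; exact ne_of_gt hdpos
      simp only [hd] at this; nlinarith [this]
    have hbv : (1 - b) * v' + b * (T - v') = T - v := by
      have : b * d = v' - (T - v) := by
        rw [hb, div_mul_cancel₀]; exact ne_of_gt hdpos
      simp only [hd] at this; nlinarith [this]
    have hca : (1 - a) * f v' + a * f (T - v') ≤ f v := by
      have := hconc.2 (Set.mem_univ v') (Set.mem_univ (T - v'))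
        (by linarith : (0:ℝ) ≤ 1 - a) ha0 (by ring)
      simpa [smul_eq_mul, hav] using this
    have hcb : (1 - b) * f v' + b * f (T - v') ≤ f (T - v) := by
      have := hconc.2 (Set.mem_univ v') (Set.mem_univ (T - v'))
        (by linarith : (0:ℝ) ≤ 1 - b) hb0 (by ring)
      simpa [smul_eq_mul, hbv] using this
    set Q : ℝ := (1 - P) * a + P * b with hQ
    have hQP' : Q ≤ P' := by
      have hmean' : (1 - P') * v' + P' * (T - v') ≤ (1 - Q) * v' + Q * (T - v') := by
        have : (1 - Q) * v' + Q * (T - v') = (1 - P) * v + P * (T - v) := by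
          simp only [hQ]; linear_combination (1 - P) * hav + P * hbv
        linarith [this]
      nlinarith [hmean']
    have hfmono : f (T - v') ≤ f v' := hmono (by linarith)
    have step1 : (1 - P') * f v' + P' * f (T - v') ≤ (1 - Q) * f v' + Q * f (T - v') := by
      nlinarith [hQP', hfmono]
    have step2 : (1 - Q) * f v' + Q * f (T - v') ≤ (1 - P) * f v + P * f (T - v) := by
      have h1' := mul_le_mul_of_nonneg_left hca (by linarith : (0:ℝ) ≤ 1 - P)
      have h2' := mul_le_mul_of_nonneg_left hcb hP0
      simp only [hQ]; nlinarith [h1', h2']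
    linarith
end

section
/- Let b > 0 and let D₁, D₂ be probability distributions supported in [0, b] such that every point of the support of D₁ is less than or equal to every point of the support of D₂; let D be the even mixture D = (1/2)D₁ + (1/2)D₂, and let μ⁺ denote the mean of D₂. Then for every ε > 0 there exists N such that for all n ≥ N: when the chooser's values g^C_1,…,g^C_n are i.i.d. from D, the expectation over divider values g^D_1,…,g^D_n drawn i.i.d. from D of the optimal divider expected utility, E_{g^D}[ sup_{q ∈ [−1,1]^n} U(q) ], is at least (1−ε)·n·μ⁺/2. -/
/-!
The divider cuts by a threshold rule `qᵢ = ψ(g^D_i)`: `ψ = -1` below `t`, `ψ = 1 - ε` above `t`,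
and at `t` itself a value in `[-1, 1 - ε]` chosen so that the atoms of `D₁` and `D₂` at `t`
cancel. Then `E_D[ψ] = -ε/2`, so the chooser's statistic `∑ qᵢ g^C_i` is a sum of `n` i.i.d.
bounded terms of negative mean, and by Chebyshev the chooser takes pile 1 with probability
`O(1/n)`, which costs the divider only `O(1)`. Otherwise the divider receives pile 1, whose
expected value is `n(2 - ε)μ⁺/4 = (1 - ε)nμ⁺/2 + nεμ⁺/4`.
-/

open BigOperators MeasureTheory

/-- The probability, over the chooser's values drawn i.i.d. from `D`, that the chooser
strictly prefers pile 1 under the division `q`. -/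
noncomputable def chooseProb (D : Measure ℝ) {n : ℕ} (q : Fin n → ℝ) : ℝ :=
  ((Measure.pi fun _ : Fin n => D) {x | 0 < ∑ i, q i * x i}).toReal

/-- The divider's expected utility from the division `q` when his values are `gD` and the
chooser's values are i.i.d. from `D`. -/
noncomputable def divUtility (D : Measure ℝ) {n : ℕ} (q gD : Fin n → ℝ) : ℝ :=
  chooseProb D q * ∑ i, ((1 - q i) / 2) * gD i
    + (1 - chooseProb D q) * ∑ i, ((1 + q i) / 2) * gD i

open ProbabilityTheory

lemma integral_sum_comp_eval {Ω ι : Type*} [MeasurableSpace Ω] [Fintype ι] {μ : Measure Ω}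
    [IsProbabilityMeasure μ] {f : Ω → ℝ} (hf : Integrable f μ) :
    ∫ ω, ∑ i, f (ω i) ∂(Measure.pi fun _ : ι => μ) = Fintype.card ι * ∫ x, f x ∂μ := by
  rw [integral_finsetSum _ fun i _ => integrable_comp_eval hf]
  simp [integral_comp_eval (μ := fun _ : ι => μ) hf.aestronglyMeasurable]

lemma card_mul_measureReal_sum_pos_le {Ω ι : Type*} [MeasurableSpace Ω] [Fintype ι]
    {μ : Measure Ω} [IsProbabilityMeasure μ] {Y : Ω → ℝ} (hY : MemLp Y 2 μ) (hneg : μ[Y] < 0) :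
    Fintype.card ι * (Measure.pi fun _ : ι => μ).real {ω | 0 < ∑ i, Y (ω i)}
      ≤ Var[Y; μ] / μ[Y] ^ 2 := by
  set π := Measure.pi fun _ : ι => μ
  set S : (ι → Ω) → ℝ := fun ω => ∑ i, Y (ω i)
  rcases Nat.eq_zero_or_pos (Fintype.card ι) with hn | hn
  · rw [hn, Nat.cast_zero, zero_mul]
    exact div_nonneg (variance_nonneg Y μ) (sq_nonneg _)
  have hcoord : ∀ i : ι, MemLp (fun ω : ι → Ω => Y (ω i)) 2 π :=
    fun i => hY.comp_measurePreserving (measurePreserving_eval _ i)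
  have hS : MemLp S 2 π := by
    simpa [S, Finset.sum_fn] using memLp_finsetSum' Finset.univ fun i _ => hcoord i
  have hmean : π[S] = (Fintype.card ι : ℝ) * μ[Y] :=
    integral_sum_comp_eval (hY.integrable one_le_two)
  have hvar : Var[S; π] = Fintype.card ι * Var[Y; μ] := by
    simpa [S, Finset.sum_fn] using
      variance_sum_pi (μ := fun _ : ι => μ) (X := fun _ => Y) fun _ => hY
  have hc : 0 < (Fintype.card ι : ℝ) * -μ[Y] := mul_pos (by exact_mod_cast hn) (neg_pos.2 hneg)
  have hsub : {ω | 0 < S ω} ⊆ {ω | (Fintype.card ι : ℝ) * -μ[Y] ≤ |S ω - π[S]|} := by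
    intro ω hω
    simp only [Set.mem_ofPred_eq, hmean] at hω ⊢
    exact le_abs.2 (Or.inl (by linarith))
  calc Fintype.card ι * π.real {ω | 0 < S ω}
      ≤ Fintype.card ι * (Var[S; π] / (Fintype.card ι * -μ[Y]) ^ 2) := by
        gcongr
        exact ENNReal.toReal_le_of_le_ofReal (div_nonneg (variance_nonneg _ _) (sq_nonneg _))
          ((measure_mono hsub).trans (meas_ge_le_variance_div_sq hS hc))
    _ = Var[Y; μ] / μ[Y] ^ 2 := by
        rw [hvar]
        field_simp

variable {n : ℕ}

noncomputable def optimalUtility (D : Measure ℝ) (gD : Fin n → ℝ) : ℝ :=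
  sSup {u : ℝ | ∃ q : Fin n → ℝ, (∀ i, q i ∈ Set.Icc (-1 : ℝ) 1) ∧ u = divUtility D q gD}

section Utility

variable (D : Measure ℝ)

lemma divUtility_eq (q gD : Fin n → ℝ) :
    divUtility D q gD = (∑ i, gD i) / 2 + (∑ i, q i * gD i) * (1 / 2 - chooseProb D q) := by
  simp only [divUtility, Finset.mul_sum, Finset.sum_mul, Finset.sum_div, ← Finset.sum_add_distrib]
  exact Finset.sum_congr rfl fun i _ => by ring

lemma chooseProb_mem_Icc [IsProbabilityMeasure D] (q : Fin n → ℝ) :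
    chooseProb D q ∈ Set.Icc (0 : ℝ) 1 :=
  ⟨measureReal_nonneg, measureReal_le_one⟩

lemma abs_sum_mul_le_sum_abs {ι : Type*} [Fintype ι] {q : ι → ℝ}
    (hq : ∀ i, q i ∈ Set.Icc (-1 : ℝ) 1) (g : ι → ℝ) : |∑ i, q i * g i| ≤ ∑ i, |g i| := by
  refine (Finset.abs_sum_le_sum_abs _ _).trans (Finset.sum_le_sum fun i _ => ?_)
  rw [abs_mul]
  exact mul_le_of_le_one_left (abs_nonneg _) (abs_le.2 (hq i))

lemma abs_divUtility_le [IsProbabilityMeasure D] {q : Fin n → ℝ}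
    (hq : ∀ i, q i ∈ Set.Icc (-1 : ℝ) 1) (gD : Fin n → ℝ) :
    |divUtility D q gD| ≤ ∑ i, |gD i| := by
  have hS := Finset.abs_sum_le_sum_abs gD Finset.univ
  have hC := abs_sum_mul_le_sum_abs hq gD
  have hP : |1 / 2 - chooseProb D q| ≤ 1 / 2 := by
    have := chooseProb_mem_Icc D q
    exact abs_le.2 ⟨by linarith [this.2], by linarith [this.1]⟩
  rw [divUtility_eq]
  calc |(∑ i, gD i) / 2 + (∑ i, q i * gD i) * (1 / 2 - chooseProb D q)|
      ≤ |∑ i, gD i| / 2 + |∑ i, q i * gD i| * |1 / 2 - chooseProb D q| := by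
        simpa only [abs_mul, abs_div, abs_two] using abs_add_le ((∑ i, gD i) / 2)
          ((∑ i, q i * gD i) * (1 / 2 - chooseProb D q))
    _ ≤ (∑ i, |gD i|) / 2 + (∑ i, |gD i|) * (1 / 2) := by gcongr
    _ = ∑ i, |gD i| := by ring

lemma continuous_divUtility (q : Fin n → ℝ) : Continuous (divUtility D q) := by
  unfold divUtility
  fun_prop

lemma bddAbove_divUtility [IsProbabilityMeasure D] (gD : Fin n → ℝ) :
    BddAbove {u : ℝ | ∃ q : Fin n → ℝ, (∀ i, q i ∈ Set.Icc (-1 : ℝ) 1) ∧ u = divUtility D q gD} :=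
  ⟨∑ i, |gD i|, by
    rintro u ⟨q, hq, rfl⟩
    exact (abs_le.1 (abs_divUtility_le D hq gD)).2⟩

lemma divUtility_le_optimalUtility [IsProbabilityMeasure D] {q : Fin n → ℝ}
    (hq : ∀ i, q i ∈ Set.Icc (-1 : ℝ) 1) (gD : Fin n → ℝ) :
    divUtility D q gD ≤ optimalUtility D gD :=
  le_csSup (bddAbove_divUtility D gD) ⟨q, hq, rfl⟩

lemma nonempty_divUtility (gD : Fin n → ℝ) :
    {u : ℝ | ∃ q : Fin n → ℝ, (∀ i, q i ∈ Set.Icc (-1 : ℝ) 1) ∧ u = divUtility D q gD}.Nonempty :=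
  ⟨_, 0, fun _ => ⟨by norm_num, by norm_num⟩, rfl⟩

lemma sum_div_two_le_optimalUtility [IsProbabilityMeasure D] (gD : Fin n → ℝ) :
    (∑ i, gD i) / 2 ≤ optimalUtility D gD := by
  have h := divUtility_le_optimalUtility D (q := 0) (fun _ => ⟨by norm_num, by norm_num⟩) gD
  simpa [divUtility_eq] using h

lemma abs_optimalUtility_le [IsProbabilityMeasure D] (gD : Fin n → ℝ) :
    |optimalUtility D gD| ≤ ∑ i, |gD i| := by
  refine abs_le.2 ⟨?_, csSup_le (nonempty_divUtility D gD) ?_⟩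
  · linarith [neg_abs_le (∑ i, gD i), Finset.abs_sum_le_sum_abs gD Finset.univ,
      Finset.sum_nonneg fun i (_ : i ∈ Finset.univ) => abs_nonneg (gD i),
      sum_div_two_le_optimalUtility D gD]
  · rintro u ⟨q, hq, rfl⟩
    exact (abs_le.1 (abs_divUtility_le D hq gD)).2

lemma lowerSemicontinuous_optimalUtility [IsProbabilityMeasure D] :
    LowerSemicontinuous (optimalUtility D : (Fin n → ℝ) → ℝ) := by
  intro gD y hy
  unfold optimalUtility at hy
  obtain ⟨_, ⟨q, hq, rfl⟩, hyq⟩ :=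
    exists_lt_of_lt_csSup (nonempty_divUtility D gD) hy
  filter_upwards [(continuous_divUtility D q).continuousAt.eventually (lt_mem_nhds hyq)] with g hg
  exact hg.trans_le (divUtility_le_optimalUtility D hq g)

lemma integrable_optimalUtility [IsProbabilityMeasure D] (ν : Measure ℝ) [IsProbabilityMeasure ν]
    (hν : Integrable (fun x => x) ν) :
    Integrable (optimalUtility D) (Measure.pi fun _ : Fin n => ν) :=
  (integrable_finsetSum _ fun _ _ => integrable_comp_eval hν.abs).mono'
    (lowerSemicontinuous_optimalUtility D).measurable.aestronglyMeasurable
    (.of_forall fun gD => abs_optimalUtility_le D gD)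

end Utility

section Chooser

variable (ν D : Measure ℝ) [IsProbabilityMeasure ν] [IsProbabilityMeasure D]

lemma integral_chooseProb_comp {ψ : ℝ → ℝ} (hψ : Measurable ψ) :
    ∫ g, chooseProb D (fun i => ψ (g i)) ∂(Measure.pi fun _ : Fin n => ν)
      = (Measure.pi fun _ : Fin n => ν.prod D).real {ω | 0 < ∑ i, ψ (ω i).1 * (ω i).2} := by
  set E : Set ((Fin n → ℝ) × (Fin n → ℝ)) := {p | 0 < ∑ i, ψ (p.1 i) * p.2 i}
  have hE : MeasurableSet E := measurableSet_lt measurable_const (by fun_prop)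
  have hpre : MeasurableEquiv.arrowProdEquivProdArrow ℝ ℝ (Fin n) ⁻¹' E
      = {ω | 0 < ∑ i, ψ (ω i).1 * (ω i).2} := rfl
  rw [measureReal_def, ← hpre,
    (measurePreserving_arrowProdEquivProdArrow ℝ ℝ (Fin n) _ _).measure_preimage
      hE.nullMeasurableSet, Measure.prod_apply hE, ← integral_toReal
      (measurable_measure_prodMk_left hE).aemeasurable (.of_forall fun _ => measure_lt_top _ _)]
  rfl

lemma card_mul_integral_chooseProb_comp_le {ψ : ℝ → ℝ} (hψ : Measurable ψ)
    (hψ1 : ∀ x, ψ x ∈ Set.Icc (-1 : ℝ) 1) {b : ℝ} (hD : ∀ᵐ x ∂D, |x| ≤ b)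
    (hneg : (∫ x, ψ x ∂ν) * ∫ x, x ∂D < 0) :
    n * ∫ g, chooseProb D (fun i => ψ (g i)) ∂(Measure.pi fun _ : Fin n => ν)
      ≤ b ^ 2 / ((∫ x, ψ x ∂ν) * ∫ x, x ∂D) ^ 2 := by
  set Y : ℝ × ℝ → ℝ := fun p => ψ p.1 * p.2
  have hY : ∀ᵐ p ∂ν.prod D, Y p ∈ Set.Icc (-b) b := by
    filter_upwards [Measure.quasiMeasurePreserving_snd.ae hD] with p hp
    refine abs_le.1 ?_
    rw [abs_mul]
    exact (mul_le_of_le_one_left (abs_nonneg _) (abs_le.2 (hψ1 p.1))).trans hp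
  have hmean : ∫ p, Y p ∂ν.prod D = (∫ x, ψ x ∂ν) * ∫ x, x ∂D := integral_prod_mul ψ fun x => x
  have hYm : Measurable Y := by fun_prop
  have hvar : Var[Y; ν.prod D] ≤ b ^ 2 := by
    have := variance_le_sub_mul_sub hY hYm.aemeasurable
    nlinarith
  have hcheb := card_mul_measureReal_sum_pos_le (ι := Fin n)
    (memLp_of_bounded hY hYm.aestronglyMeasurable 2) (hmean ▸ hneg)
  rw [Fintype.card_fin, hmean] at hcheb
  rw [integral_chooseProb_comp ν D hψ]
  exact hcheb.trans (by gcongr)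

lemma measurable_chooseProb_comp (D : Measure ℝ) [IsProbabilityMeasure D] {ψ : ℝ → ℝ}
    (hψ : Measurable ψ) : Measurable fun g : Fin n → ℝ => chooseProb D fun i => ψ (g i) :=
  (measurable_measure_prodMk_left (ν := Measure.pi fun _ : Fin n => D)
    (measurableSet_lt measurable_const (by fun_prop) :
      MeasurableSet {p : (Fin n → ℝ) × (Fin n → ℝ) | 0 < ∑ i, ψ (p.1 i) * p.2 i})).ennreal_toReal

end Chooser

lemma sum_div_two_add_sum_mul_div_two_sub_le_divUtility (D : Measure ℝ) [IsProbabilityMeasure D]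
    {q : Fin n → ℝ} (hq : ∀ i, q i ∈ Set.Icc (-1 : ℝ) 1) {b : ℝ} {g : Fin n → ℝ}
    (hg : ∀ i, |g i| ≤ b) :
    (∑ i, g i) / 2 + (∑ i, q i * g i) / 2 - n * b * chooseProb D q ≤ divUtility D q g := by
  have hC : ∑ i, q i * g i ≤ n * b :=
    (le_abs_self _).trans <| (abs_sum_mul_le_sum_abs hq g).trans <| by
      simpa using Finset.sum_le_sum fun i (_ : i ∈ Finset.univ) => hg i
  have hP := chooseProb_mem_Icc D q
  rw [divUtility_eq]
  nlinarith [hP.1]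

lemma integral_optimalUtility_ge (ν D : Measure ℝ) [IsProbabilityMeasure ν]
    [IsProbabilityMeasure D] {b : ℝ} (hν : ∀ᵐ x ∂ν, |x| ≤ b) (hD : ∀ᵐ x ∂D, |x| ≤ b)
    {ψ : ℝ → ℝ} (hψ : Measurable ψ) (hψ1 : ∀ x, ψ x ∈ Set.Icc (-1 : ℝ) 1)
    (hneg : (∫ x, ψ x ∂ν) * ∫ x, x ∂D < 0) :
    n * (∫ x, x ∂ν + ∫ x, ψ x * x ∂ν) / 2 - b ^ 3 / ((∫ x, ψ x ∂ν) * ∫ x, x ∂D) ^ 2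
      ≤ ∫ g, optimalUtility D g ∂(Measure.pi fun _ : Fin n => ν) := by
  set π := Measure.pi fun _ : Fin n => ν
  set P : (Fin n → ℝ) → ℝ := fun g => chooseProb D fun i => ψ (g i)
  have hb : 0 ≤ b := let ⟨x, hx⟩ := hν.exists; (abs_nonneg x).trans hx
  have hx : Integrable (fun x => x) ν := .of_bound (by fun_prop) b hν
  have hψx : Integrable (fun x => ψ x * x) ν :=
    hx.bdd_mul hψ.aestronglyMeasurable (.of_forall fun x => abs_le.2 (hψ1 x))
  have hP : Integrable P π := .of_bound (measurable_chooseProb_comp D hψ).aestronglyMeasurable 1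
    (.of_forall fun g => abs_le.2 ⟨by linarith [(chooseProb_mem_Icc D fun i => ψ (g i)).1],
      (chooseProb_mem_Icc D fun i => ψ (g i)).2⟩)
  have hS : Integrable (fun g : Fin n → ℝ => (∑ i, g i) / 2) π :=
    (integrable_finsetSum _ fun _ _ => integrable_comp_eval (μ := fun _ => ν) hx).div_const 2
  have hC : Integrable (fun g : Fin n → ℝ => (∑ i, ψ (g i) * g i) / 2) π :=
    (integrable_finsetSum _ fun _ _ => integrable_comp_eval (μ := fun _ => ν) hψx).div_const 2
  have hSC : Integrable (fun g : Fin n → ℝ => (∑ i, g i) / 2 + (∑ i, ψ (g i) * g i) / 2) π :=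
    hS.add hC
  have hbound : ∀ᵐ g ∂π,
      (∑ i, g i) / 2 + (∑ i, ψ (g i) * g i) / 2 - n * b * P g ≤ optimalUtility D g := by
    filter_upwards [ae_all_iff.2 fun i : Fin n => Measure.tendsto_eval_ae_ae.eventually hν]
      with g hg
    exact (sum_div_two_add_sum_mul_div_two_sub_le_divUtility D (fun i => hψ1 (g i)) hg).trans
      (divUtility_le_optimalUtility D (fun i => hψ1 (g i)) g)
  have hchoose := card_mul_integral_chooseProb_comp_le (n := n) ν D hψ hψ1 hD hneg
  calc _ ≤ n * (∫ x, x ∂ν + ∫ x, ψ x * x ∂ν) / 2 - b * (n * ∫ g, P g ∂π) := by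
        have := mul_le_mul_of_nonneg_left hchoose hb
        rw [← mul_div_assoc, ← pow_succ'] at this
        linarith
    _ = ∫ g, (∑ i, g i) / 2 + (∑ i, ψ (g i) * g i) / 2 - n * b * P g ∂π := by
        rw [integral_sub hSC (hP.const_mul _), integral_add hS hC, integral_div,
          integral_div, integral_sum_comp_eval hx, integral_sum_comp_eval hψx, integral_const_mul,
          Fintype.card_fin]
        ring
    _ ≤ ∫ g, optimalUtility D g ∂π :=
        integral_mono_ae (hSC.sub (hP.const_mul _)) (integrable_optimalUtility D ν hx) hbound

lemma eventually_le_integral_optimalUtility (D : Measure ℝ) [IsProbabilityMeasure D] {b : ℝ}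
    (hD : ∀ᵐ x ∂D, |x| ≤ b) {ψ : ℝ → ℝ} (hψ : Measurable ψ)
    (hψ1 : ∀ x, ψ x ∈ Set.Icc (-1 : ℝ) 1) (hneg : (∫ x, ψ x ∂D) * ∫ x, x ∂D < 0) {δ : ℝ}
    (hδ : 0 < δ) :
    ∀ᶠ n : ℕ in Filter.atTop, n * ((∫ x, x ∂D + ∫ x, ψ x * x ∂D) / 2 - δ)
      ≤ ∫ g, optimalUtility D g ∂(Measure.pi fun _ : Fin n => D) := by
  filter_upwards [Filter.eventually_ge_atTop ⌈b ^ 3 / ((∫ x, ψ x ∂D) * ∫ x, x ∂D) ^ 2 / δ⌉₊]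
    with n hn
  have hK := (div_le_iff₀ hδ).1 (Nat.ceil_le.1 hn)
  linarith [integral_optimalUtility_ge (n := n) D D hD hD hψ hψ1 hneg]

lemma integral_optimalUtility_nonneg (ν D : Measure ℝ) [IsProbabilityMeasure ν]
    [IsProbabilityMeasure D] (hν : ∀ᵐ x ∂ν, 0 ≤ x) :
    0 ≤ ∫ g, optimalUtility D g ∂(Measure.pi fun _ : Fin n => ν) :=
  integral_nonneg_of_ae <| by
    filter_upwards [ae_all_iff.2 fun i : Fin n => Measure.tendsto_eval_ae_ae.eventually hν]
      with g hg
    exact (div_nonneg (Finset.sum_nonneg fun i _ => hg i) zero_le_two).trans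
      (sum_div_two_le_optimalUtility D g)

lemma integral_half_smul_add_half_smul {α : Type*} [MeasurableSpace α] {μ ν : Measure α}
    {f : α → ℝ} (hμ : Integrable f μ) (hν : Integrable f ν) :
    ∫ x, f x ∂((1 / 2 : ENNReal) • μ + (1 / 2 : ENNReal) • ν)
      = (∫ x, f x ∂μ + ∫ x, f x ∂ν) / 2 := by
  rw [integral_add_measure (hμ.smul_measure (by norm_num)) (hν.smul_measure (by norm_num)),
    integral_smul_measure, integral_smul_measure]
  norm_num [ENNReal.toReal_div]
  ring

lemma integral_mul_eq_of_ae_eq_ite {ν : Measure ℝ} {ψ f : ℝ → ℝ} {t c k : ℝ}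
    (hψ : ∀ᵐ x ∂ν, ψ x = if x = t then c else k) (hf : Integrable f ν) :
    ∫ x, ψ x * f x ∂ν = k * ∫ x, f x ∂ν + (c - k) * f t * ν.real {t} := by
  have hsplit : ∀ᵐ x ∂ν, ψ x * f x = k * f x + (c - k) * ({t} : Set ℝ).indicator f x := by
    filter_upwards [hψ] with x hx
    rw [hx]
    by_cases hxt : x = t
    · simp [hxt]
      ring
    · simp [hxt]
  rw [integral_congr_ae hsplit,
    integral_add (hf.const_mul k) ((hf.indicator (measurableSet_singleton t)).const_mul _),
    integral_const_mul, integral_const_mul, integral_indicator (measurableSet_singleton t),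
    integral_singleton, smul_eq_mul]
  ring

lemma exists_mem_Icc_sub_mul_add_sub_mul_eq_zero {lo hi a β : ℝ} (hlohi : lo ≤ hi) (ha : 0 ≤ a)
    (hβ : 0 ≤ β) : ∃ c ∈ Set.Icc lo hi, (c - lo) * a + (c - hi) * β = 0 := by
  rcases (add_nonneg ha hβ).eq_or_lt with h | h
  · exact ⟨lo, ⟨le_rfl, hlohi⟩, by nlinarith⟩
  refine ⟨(lo * a + hi * β) / (a + β), ⟨?_, ?_⟩, ?_⟩
  · rw [le_div_iff₀ h]; nlinarith
  · rw [div_le_iff₀ h]; nlinarith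
  · field_simp
    ring

lemma exists_threshold_strategy (D₁ D₂ D : Measure ℝ) [IsProbabilityMeasure D₁]
    [IsProbabilityMeasure D₂] {t : ℝ} (hsep₁ : D₁ {x | t < x} = 0) (hsep₂ : D₂ {x | x < t} = 0)
    (hD : D = (1 / 2 : ENNReal) • D₁ + (1 / 2 : ENNReal) • D₂)
    (h₁ : Integrable (fun x => x) D₁) (h₂ : Integrable (fun x => x) D₂) {ε : ℝ} (hε₀ : 0 ≤ ε)
    (hε₂ : ε ≤ 2) :
    ∃ ψ : ℝ → ℝ, Measurable ψ ∧ (∀ x, ψ x ∈ Set.Icc (-1 : ℝ) 1) ∧ ∫ x, ψ x ∂D = -ε / 2 ∧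
      ∫ x, ψ x * x ∂D = ((1 - ε) * ∫ x, x ∂D₂ - ∫ x, x ∂D₁) / 2 := by
  obtain ⟨c, hc, hbal⟩ := exists_mem_Icc_sub_mul_add_sub_mul_eq_zero (by linarith : -1 ≤ 1 - ε)
    (measureReal_nonneg (μ := D₁) (s := {t})) (measureReal_nonneg (μ := D₂) (s := {t}))
  set ψ : ℝ → ℝ := fun x => if x < t then -1 else if x = t then c else 1 - ε
  have hψm : Measurable ψ := Measurable.ite measurableSet_Iio measurable_const
    (Measurable.ite (measurableSet_singleton t) measurable_const measurable_const)
  have hψ1 : ∀ x, ψ x ∈ Set.Icc (-1 : ℝ) 1 := fun x => by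
    simp only [ψ]
    split_ifs
    exacts [⟨le_rfl, by norm_num⟩, ⟨hc.1, by linarith [hc.2]⟩, ⟨by linarith, by linarith⟩]
  have hψ₁ : ∀ᵐ x ∂D₁, ψ x = if x = t then c else -1 := by
    filter_upwards [measure_eq_zero_iff_ae_notMem.1 hsep₁] with x hx
    by_cases hxt : x = t
    · simp [ψ, hxt]
    · simp [ψ, hxt, (not_lt.1 hx).lt_of_ne hxt]
  have hψ₂ : ∀ᵐ x ∂D₂, ψ x = if x = t then c else 1 - ε := by
    filter_upwards [measure_eq_zero_iff_ae_notMem.1 hsep₂] with x hx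
    by_cases hxt : x = t
    · simp [ψ, hxt]
    · simp [ψ, hxt, hx]
  have hmix : ∀ f : ℝ → ℝ, Integrable f D₁ → Integrable f D₂ →
      ∫ x, ψ x * f x ∂D = (∫ x, ψ x * f x ∂D₁ + ∫ x, ψ x * f x ∂D₂) / 2 := fun f hf₁ hf₂ =>
    have hbdd : ∀ ν : Measure ℝ, ∀ᵐ x ∂ν, ‖ψ x‖ ≤ 1 := fun _ => .of_forall fun x => abs_le.2 (hψ1 x)
    hD ▸ integral_half_smul_add_half_smul (hf₁.bdd_mul hψm.aestronglyMeasurable (hbdd D₁))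
      (hf₂.bdd_mul hψm.aestronglyMeasurable (hbdd D₂))
  refine ⟨ψ, hψm, hψ1, ?_, ?_⟩
  · have h := hmix (fun _ => 1) (integrable_const 1) (integrable_const 1)
    rw [integral_mul_eq_of_ae_eq_ite hψ₁ (integrable_const 1),
      integral_mul_eq_of_ae_eq_ite hψ₂ (integrable_const 1)] at h
    simp only [mul_one, integral_const, probReal_univ, smul_eq_mul] at h
    linear_combination h + hbal / 2
  · rw [hmix _ h₁ h₂, integral_mul_eq_of_ae_eq_ite hψ₁ h₁, integral_mul_eq_of_ae_eq_ite hψ₂ h₂]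
    linear_combination t * hbal / 2

theorem divider_asymptotic_lower_bound_general
    (b : ℝ)
    (D₁ D₂ : Measure ℝ) [IsProbabilityMeasure D₁] [IsProbabilityMeasure D₂]
    (hsupp₁ : D₁ (Set.Icc (0 : ℝ) b)ᶜ = 0) (hsupp₂ : D₂ (Set.Icc (0 : ℝ) b)ᶜ = 0)
    (t : ℝ) (hsep₁ : D₁ {x | t < x} = 0) (hsep₂ : D₂ {x | x < t} = 0)
    (D : Measure ℝ) (hD : D = (1 / 2 : ENNReal) • D₁ + (1 / 2 : ENNReal) • D₂)
    (μplus : ℝ) (hμplus : μplus = ∫ x, x ∂D₂) :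
    ∀ ε : ℝ, 0 < ε → ∃ N : ℕ, ∀ n : ℕ, N ≤ n →
      (1 - ε) * n * μplus / 2 ≤
        ∫ gD : Fin n → ℝ,
          sSup {u : ℝ | ∃ q : Fin n → ℝ,
            (∀ i, q i ∈ Set.Icc (-1 : ℝ) 1) ∧ u = divUtility D q gD}
          ∂(Measure.pi fun _ : Fin n => D) := by
  intro ε hε
  subst hμplus
  have hI₁ : ∀ᵐ x ∂D₁, x ∈ Set.Icc 0 b := mem_ae_iff.2 hsupp₁
  have hI₂ : ∀ᵐ x ∂D₂, x ∈ Set.Icc 0 b := mem_ae_iff.2 hsupp₂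
  have hI : ∀ᵐ x ∂D, x ∈ Set.Icc 0 b := hD ▸ ae_add_measure_iff.2
    ⟨Measure.ae_smul_measure hI₁ _, Measure.ae_smul_measure hI₂ _⟩
  have : IsProbabilityMeasure D := ⟨by simp [hD, ENNReal.inv_two_add_inv_two]⟩
  have habs : ∀ {ν : Measure ℝ}, (∀ᵐ x ∂ν, x ∈ Set.Icc 0 b) → ∀ᵐ x ∂ν, |x| ≤ b :=
    fun h => h.mono fun x hx => abs_le.2 ⟨by linarith [hx.1, hx.2], hx.2⟩
  have h₁ : Integrable (fun x => x) D₁ := .of_bound (by fun_prop) b (habs hI₁)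
  have h₂ : Integrable (fun x => x) D₂ := .of_bound (by fun_prop) b (habs hI₂)
  have hμminus : 0 ≤ ∫ x, x ∂D₁ := integral_nonneg_of_ae (hI₁.mono fun x hx => hx.1)
  have hμplus : 0 ≤ ∫ x, x ∂D₂ := integral_nonneg_of_ae (hI₂.mono fun x hx => hx.1)
  rcases le_or_gt ((1 - ε) * ∫ x, x ∂D₂) 0 with hle | hpos
  · refine ⟨0, fun n _ => le_trans ?_
      (integral_optimalUtility_nonneg D D (hI.mono fun x hx => hx.1))⟩
    nlinarith [(Nat.cast_nonneg n : (0 : ℝ) ≤ n)]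
  have hμpos : 0 < ∫ x, x ∂D₂ := hμplus.lt_of_ne (by rintro h; simp [← h] at hpos)
  obtain ⟨ψ, hψ, hψ1, hψD, hψxD⟩ :=
    exists_threshold_strategy D₁ D₂ D hsep₁ hsep₂ hD h₁ h₂ hε.le (by nlinarith)
  have hmean : ∫ x, x ∂D = (∫ x, x ∂D₁ + ∫ x, x ∂D₂) / 2 :=
    hD ▸ integral_half_smul_add_half_smul h₁ h₂
  obtain ⟨N, hN⟩ := Filter.eventually_atTop.1 <| eventually_le_integral_optimalUtility D (habs hI)
    hψ hψ1 (by rw [hψD, hmean]; nlinarith [mul_pos hε hμpos]) (div_pos (mul_pos hε hμpos) four_pos)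
  refine ⟨N, fun n hn => (le_of_eq ?_).trans (hN n hn)⟩
  rw [hψxD, hmean]
  ring

/-- Let `D₁, D₂` be probability distributions supported in `[0, b]` with
every point of the support of `D₁` at most every point of the support of `D₂` (witnessed by
a separating threshold `t`), let `D` be the even mixture of `D₁` and `D₂`, and let `μ⁺` be
the mean of `D₂`.  Then for every `ε > 0` there is `N` such that for all `n ≥ N`, with all
values i.i.d. from `D`, the expected optimal divider utility is at least `(1−ε)·n·μ⁺/2`. -/
theorem divider_asymptotic_lower_bound
    (b : ℝ) (hb : 0 < b)
    (D₁ D₂ : Measure ℝ) [IsProbabilityMeasure D₁] [IsProbabilityMeasure D₂]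
    (hsupp₁ : D₁ (Set.Icc (0 : ℝ) b)ᶜ = 0) (hsupp₂ : D₂ (Set.Icc (0 : ℝ) b)ᶜ = 0)
    (t : ℝ) (hsep₁ : D₁ {x | t < x} = 0) (hsep₂ : D₂ {x | x < t} = 0)
    (D : Measure ℝ) (hD : D = (1 / 2 : ENNReal) • D₁ + (1 / 2 : ENNReal) • D₂)
    (μplus : ℝ) (hμplus : μplus = ∫ x, x ∂D₂) :
    ∀ ε : ℝ, 0 < ε → ∃ N : ℕ, ∀ n : ℕ, N ≤ n →
      (1 - ε) * n * μplus / 2 ≤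
        ∫ gD : Fin n → ℝ,
          sSup {u : ℝ | ∃ q : Fin n → ℝ,
            (∀ i, q i ∈ Set.Icc (-1 : ℝ) 1) ∧ u = divUtility D q gD}
          ∂(Measure.pi fun _ : Fin n => D) :=
  divider_asymptotic_lower_bound_general b D₁ D₂ hsupp₁ hsupp₂ t hsep₁ hsep₂ D hD μplus hμplus
end

section
/- Fix divider values g^D ∈ ℝ^n. Let p ∈ [0,1]^n be a division with ∑_i p_i g^D_i ≥ ∑_i (1−p_i) g^D_i (the divider weakly prefers pile 1), and let A ⊆ [0,1]^n be a finite set of alternatives such that for every a ∈ A, ∑_i a_i g^D_i ≥ ∑_i (1−p_i) g^D_i. Let p' := (1/2,…,1/2) and A' := A ∪ {p}. Then for every chooser value vector g^C ∈ ℝ^n, the divider's payoff in the multiple-offers game under (p', A') is at least his payoff under (p, A), where in each game the chooser selects the option maximizing her own value and breaks ties among her value-maximizing options by maximizing the divider's value. -/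
open BigOperators

/-- In the multiple-offers game with division `p` and alternatives `A`, the set of options,
each recorded as a pair (chooser's value, divider's value): pile 1, pile 2, and each
alternative `a ∈ A` (under which the chooser receives the fractions `1 − a_i` and the
divider the fractions `a_i`). -/
def offerOptions {n : ℕ} (p : Fin n → ℝ) (A : Finset (Fin n → ℝ)) (gD gC : Fin n → ℝ) :
    Set (ℝ × ℝ) :=
  {(∑ i, p i * gC i, ∑ i, (1 - p i) * gD i), (∑ i, (1 - p i) * gC i, ∑ i, p i * gD i)} ∪
    ((fun a => (∑ i, (1 - a i) * gC i, ∑ i, a i * gD i)) '' (A : Set (Fin n → ℝ)))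

/-- The divider's payoff in the multiple-offers game: the chooser selects an option
maximizing her own value, breaking ties among her value-maximizing options in favor of the
divider (i.e. by maximizing the divider's value). -/
noncomputable def divPayoffMO {n : ℕ} (p : Fin n → ℝ) (A : Finset (Fin n → ℝ))
    (gD gC : Fin n → ℝ) : ℝ :=
  sSup (Prod.snd ''
    {o ∈ offerOptions p A gD gC | ∀ o' ∈ offerOptions p A gD gC, o'.1 ≤ o.1})

lemma offerOptions_finite {n : ℕ} (p : Fin n → ℝ) (A : Finset (Fin n → ℝ))
    (gD gC : Fin n → ℝ) : (offerOptions p A gD gC).Finite :=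
  ((Set.finite_singleton _).insert _).union (A.finite_toSet.image _)

lemma mem_offerOptions {n : ℕ} {p : Fin n → ℝ} {A : Finset (Fin n → ℝ)}
    {gD gC : Fin n → ℝ} {o : ℝ × ℝ} :
    o ∈ offerOptions p A gD gC ↔
      o = (∑ i, p i * gC i, ∑ i, (1 - p i) * gD i) ∨
      o = (∑ i, (1 - p i) * gC i, ∑ i, p i * gD i) ∨
      ∃ a ∈ A, (∑ i, (1 - a i) * gC i, ∑ i, a i * gD i) = o := by
  simp [offerOptions, Set.mem_union, Set.mem_insert_iff, Set.mem_image, or_assoc]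

/-- Fix divider values `g^D`.  Let `p ∈ [0,1]^n` be a division under which
the divider weakly prefers pile 1, and let `A` be a finite set of alternatives in `[0,1]^n`,
each of which the divider weakly prefers to pile 2.  Replacing `p` by the even division
`p' = (1/2, …, 1/2)` and adding `p` as an alternative, for every chooser value vector the
divider's payoff under `(p', A ∪ {p})` is at least his payoff under `(p, A)`. -/
theorem multiple_offers_even_division (n : ℕ) (gD : Fin n → ℝ)
    (p : Fin n → ℝ) (hp : ∀ i, p i ∈ Set.Icc (0 : ℝ) 1)
    (hpref : ∑ i, (1 - p i) * gD i ≤ ∑ i, p i * gD i)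
    (A : Finset (Fin n → ℝ)) (hA : ∀ a ∈ A, ∀ i, a i ∈ Set.Icc (0 : ℝ) 1)
    (hAgood : ∀ a ∈ A, ∑ i, (1 - p i) * gD i ≤ ∑ i, a i * gD i) :
    ∀ gC : Fin n → ℝ,
      divPayoffMO p A gD gC ≤ divPayoffMO (fun _ => 1 / 2) (insert p A) gD gC := by
  intro gC
  -- notation
  set Sold := offerOptions p A gD gC with hSold
  set Snew := offerOptions (fun _ => 1 / 2) (insert p A) gD gC with hSnew
  -- averaging identity
  have half : ∀ f : Fin n → ℝ,
      ∑ i, (1 / 2 : ℝ) * f i = (∑ i, (1 - p i) * f i + ∑ i, p i * f i) / 2 := by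
    intro f
    rw [← Finset.sum_add_distrib, eq_div_iff (two_ne_zero), Finset.sum_mul]
    exact Finset.sum_congr rfl fun i _ => by ring
  have half' : ∀ f : Fin n → ℝ,
      ∑ i, (1 - (fun _ => (1 / 2 : ℝ)) i) * f i = ∑ i, (1 / 2 : ℝ) * f i := by
    intro f; apply Finset.sum_congr rfl; intro i _; norm_num
  -- membership of the key options in Snew
  have hmem_half : ((∑ i, (1 / 2 : ℝ) * gC i, ∑ i, (1 / 2 : ℝ) * gD i)) ∈ Snew := by
    rw [hSnew, mem_offerOptions]; left; rw [Prod.ext_iff]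
    exact ⟨rfl, (half' gD).symm⟩
  have hmem_pile2 : ((∑ i, (1 - p i) * gC i, ∑ i, p i * gD i)) ∈ Snew := by
    rw [hSnew, mem_offerOptions]; right; right
    exact ⟨p, Finset.mem_insert_self _ _, rfl⟩
  have hmem_alt : ∀ a ∈ A,
      ((∑ i, (1 - a i) * gC i, ∑ i, a i * gD i)) ∈ Snew := by
    intro a ha
    rw [hSnew, mem_offerOptions]; right; right
    exact ⟨a, Finset.mem_insert_of_mem ha, rfl⟩
  -- every option in Snew has divider value at least pile 1's old divider value
  have hD_lb : ∀ o ∈ Snew, ∑ i, (1 - p i) * gD i ≤ o.2 := by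
    intro o ho
    rw [hSnew, mem_offerOptions] at ho
    rcases ho with h1 | h2 | ⟨a, ha, rfl⟩
    · rw [h1]; simp only
      rw [half' gD, half gD]; linarith
    · rw [h2]; simp only
      rw [half gD]; linarith
    · simp only
      rw [Finset.mem_insert] at ha
      rcases ha with rfl | ha
      · exact hpref
      · exact hAgood a ha
  -- every option in Snew has chooser value at most max of the two old piles
  have hC_ub : ∀ o ∈ Snew,
      o.1 ≤ max (∑ i, p i * gC i) (∑ i, (1 - p i) * gC i) ∨
      (∃ a ∈ A, (∑ i, (1 - a i) * gC i, ∑ i, a i * gD i) = o) := by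
    intro o ho
    rw [hSnew, mem_offerOptions] at ho
    rcases ho with h1 | h2 | ⟨a, ha, rfl⟩
    · left; rw [h1]; simp only
      rw [half gC]
      rcases le_total (∑ i, (1 - p i) * gC i) (∑ i, p i * gC i) with h | h
      · exact le_trans (by linarith) (le_max_left _ _)
      · exact le_trans (by linarith) (le_max_right _ _)
    · left; rw [h2]; simp only
      rw [half' gC, half gC]
      rcases le_total (∑ i, (1 - p i) * gC i) (∑ i, p i * gC i) with h | h
      · exact le_trans (by linarith) (le_max_left _ _)
      · exact le_trans (by linarith) (le_max_right _ _)
    · rw [Finset.mem_insert] at ha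
      rcases ha with rfl | ha
      · left; exact le_max_right _ _
      · right; exact ⟨a, ha, rfl⟩
  -- maximizer sets
  set Mold := {o ∈ Sold | ∀ o' ∈ Sold, o'.1 ≤ o.1} with hMold
  set Mnew := {o ∈ Snew | ∀ o' ∈ Snew, o'.1 ≤ o.1} with hMnew
  have hSnew_fin : Snew.Finite := offerOptions_finite _ _ _ _
  have hMnew_fin : Mnew.Finite := hSnew_fin.subset (Set.sep_subset _ _)
  have hSnew_ne : Snew.Nonempty := ⟨_, hmem_half⟩
  have hMnew_ne : Mnew.Nonempty := by
    obtain ⟨a, ha, hmax⟩ := Set.exists_max_image Snew Prod.fst hSnew_fin hSnew_ne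
    exact ⟨a, ha, hmax⟩
  have hbdd : BddAbove (Prod.snd '' Mnew) := (hMnew_fin.image _).bddAbove
  -- main step: each old maximizer is dominated by some new maximizer
  have key : ∀ m ∈ Mold, ∃ m' ∈ Mnew, m.2 ≤ m'.2 := by
    intro m hm
    obtain ⟨hmS, hmmax⟩ := hm
    rw [hSold, mem_offerOptions] at hmS
    have hC1 : (∑ i, p i * gC i, ∑ i, (1 - p i) * gD i) ∈ Sold := by
      rw [hSold, mem_offerOptions]; left; rfl
    have hC2 : (∑ i, (1 - p i) * gC i, ∑ i, p i * gD i) ∈ Sold := by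
      rw [hSold, mem_offerOptions]; right; left; rfl
    rcases hmS with h1 | h2 | ⟨a, ha, rfl⟩
    · -- old maximizer is pile 1: any new maximizer dominates D1
      obtain ⟨m', hm'⟩ := hMnew_ne
      refine ⟨m', hm', ?_⟩
      rw [h1]
      exact hD_lb m' hm'.1
    · -- old maximizer is pile 2: pile 2 (as alternative p) is a new maximizer
      refine ⟨(∑ i, (1 - p i) * gC i, ∑ i, p i * gD i), ⟨hmem_pile2, ?_⟩, by rw [h2]⟩
      intro o' ho'
      rcases hC_ub o' ho' with h | ⟨a, ha, rfl⟩
      · refine le_trans h (max_le ?_ ?_)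
        · have := hmmax _ hC1; rw [h2] at this; exact this
        · exact le_refl _
      · have := hmmax _ (by rw [hSold, mem_offerOptions]; exact Or.inr (Or.inr ⟨a, ha, rfl⟩))
        rw [h2] at this; exact this
    · -- old maximizer is an alternative: it is also a new maximizer
      refine ⟨_, ⟨hmem_alt a ha, ?_⟩, le_refl _⟩
      intro o' ho'
      rcases hC_ub o' ho' with h | ⟨a', ha', rfl⟩
      · refine le_trans h (max_le (hmmax _ hC1) (hmmax _ hC2))
      · exact hmmax _ (by rw [hSold, mem_offerOptions]; exact Or.inr (Or.inr ⟨a', ha', rfl⟩))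
  -- conclude
  rw [divPayoffMO, divPayoffMO]
  have hSold_fin : Sold.Finite := offerOptions_finite _ _ _ _
  have hSold_ne : Sold.Nonempty := ⟨_, by rw [hSold, mem_offerOptions]; left; rfl⟩
  have hMold_ne : Mold.Nonempty := by
    obtain ⟨a, ha, hmax⟩ := Set.exists_max_image Sold Prod.fst hSold_fin hSold_ne
    exact ⟨a, ha, hmax⟩
  apply csSup_le (hMold_ne.image _)
  rintro y ⟨m, hm, rfl⟩
  obtain ⟨m', hm', hle⟩ := key m hm
  exact le_trans hle (le_csSup hbdd ⟨m', hm', rfl⟩)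
end
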